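/- Let l be a positive integer, n a nonzero integer, λ a nonnegative integer, and 0 ≤ j ≤ |n|−1. Then, taking the Weil–Brezin transform associated to the lattice N_{2l} = ℤ × 2lℤ × ℤ (i.e. with l replaced by 2l), one has (W_n^{j,0}F_{n,λ}) ∘ φ = e^{πi(n+λ)} · W_n^{j',0}F_{n,λ} as functions on ℝ³, where 0 ≤ j' ≤ |n|−1 is the representative of −j mod |n|. -/
import Mathlib
set_option maxRecDepth 10000
set_option maxHeartbeats 1000000


noncomputable section

abbrev H3 := ℝ × ℝ × ℝ

/-- the map φ(p,q,s) = (−p, −q, s + 1/2) -/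
def phi : H3 → H3 := fun x => (-x.1, -x.2.1, x.2.2 + 1 / 2)

/-- Weil–Brezin transform associated to the lattice N_l -/
def WB (l : ℕ) (n j u : ℤ) (g : ℝ → ℂ) : H3 → ℂ := fun x =>
  Complex.exp (2 * Real.pi * Complex.I * (n : ℂ) * (x.2.2 : ℂ)) *
    ∑' k : ℤ,
      g (x.1 + (k : ℝ) + (j : ℝ) / |(n : ℝ)| + (u : ℝ) / ((l : ℝ) * (n : ℝ))) *
        Complex.exp (2 * Real.pi * Complex.I * (n : ℂ) *
          ((((k : ℝ) + (j : ℝ) / |(n : ℝ)| + (u : ℝ) / ((l : ℝ) * (n : ℝ))) : ℝ) : ℂ) *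
          (x.2.1 : ℂ))

/-- physicists' Hermite polynomials: H₀ = 1, H_{λ+1} = 2X·H_λ − H_λ' -/
def physHermite : ℕ → Polynomial ℝ
  | 0 => 1
  | (lam + 1) => 2 * Polynomial.X * physHermite lam - (physHermite lam).derivative

/-- F_{n,λ}(x) = H_λ(√(2π|n|) x) e^{−π|n|x²} -/
def Fnl (n : ℤ) (lam : ℕ) : ℝ → ℂ := fun x =>
  (((physHermite lam).eval (Real.sqrt (2 * Real.pi * |(n : ℝ)|) * x) *
    Real.exp (-Real.pi * |(n : ℝ)| * x ^ 2) : ℝ) : ℂ)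

open Polynomial in
lemma physHermite_comp_neg (lam : ℕ) :
    (physHermite lam).comp (-X) = (-1) ^ lam * physHermite lam := by
  induction lam with
  | zero => simp [physHermite]
  | succ lam ih =>
    have hd : (derivative (physHermite lam)).comp (-X)
        = -((-1) ^ lam * derivative (physHermite lam)) := by
      have h := congrArg derivative ih
      rw [derivative_comp] at h
      simp only [derivative_neg, derivative_X, neg_mul, one_mul] at h
      rw [derivative_mul] at h
      have h0 : derivative ((-1 : Polynomial ℝ) ^ lam) = 0 := by
        rw [show ((-1 : Polynomial ℝ)) = C (-1) by rw [map_neg, C_1], ← C_pow, derivative_C]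
      rw [h0, zero_mul, zero_add] at h
      linear_combination (norm := ring_nf) -h
    show ((2 * X * physHermite lam - derivative (physHermite lam)).comp (-X)) = _
    rw [sub_comp, mul_comp, mul_comp, X_comp, ih, hd]
    have h2 : (2 : Polynomial ℝ).comp (-X) = 2 := by simp
    rw [h2]
    show _ = (-1)^(lam+1) * (2 * X * physHermite lam - derivative (physHermite lam))
    ring

lemma physHermite_eval_neg (lam : ℕ) (y : ℝ) :
    (physHermite lam).eval (-y) = (-1) ^ lam * (physHermite lam).eval y := by
  have h := congrArg (Polynomial.eval y) (physHermite_comp_neg lam)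
  simpa [Polynomial.eval_comp] using h

lemma Fnl_neg (n : ℤ) (lam : ℕ) (x : ℝ) :
    Fnl n lam (-x) = (-1) ^ lam * Fnl n lam x := by
  have h1 : Real.sqrt (2 * Real.pi * |(n : ℝ)|) * (-x)
      = -(Real.sqrt (2 * Real.pi * |(n : ℝ)|) * x) := by ring
  have h2 : (-x) ^ 2 = x ^ 2 := by ring
  rw [Fnl, Fnl]
  simp only [h1, h2, physHermite_eval_neg]
  push_cast
  ring

/-- behaviour of the u = 0 Weil–Brezin eigenfunctions (for the lattice
N_{2l}) under pullback by φ. -/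
theorem WB_comp_phi_u_zero (l : ℕ) (hl : 0 < l) (n : ℤ) (hn : n ≠ 0) (lam : ℕ)
    (j : ℤ) (hj0 : 0 ≤ j) (hj1 : j ≤ |n| - 1) :
    ∀ x : H3, WB (2 * l) n j 0 (Fnl n lam) (phi x) =
      Complex.exp (Real.pi * Complex.I * ((n : ℂ) + (lam : ℂ))) *
        WB (2 * l) n ((-j) % |n|) 0 (Fnl n lam) x := by
  intro x
  obtain ⟨p, q, s⟩ := x
  have hnR : (n : ℝ) ≠ 0 := Int.cast_ne_zero.mpr hn
  have habsne : |(n : ℝ)| ≠ 0 := abs_ne_zero.mpr hnR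
  set m : ℤ := -((-j) / |n|) with hmdef
  have hm : ((-j) % |n| : ℤ) = m * |n| - j := by rw [Int.emod_def]; ring
  have hc' : (((-j) % |n| : ℤ) : ℝ) / |(n : ℝ)| = (m : ℝ) - (j : ℝ) / |(n : ℝ)| := by
    rw [hm]
    push_cast
    field_simp
  simp only [WB, phi, Int.cast_zero, zero_div, add_zero]
  set c : ℝ := (j : ℝ) / |(n : ℝ)| with hc
  set c' : ℝ := (((-j) % |n| : ℤ) : ℝ) / |(n : ℝ)| with hcp
  have hsum : (∑' k : ℤ, Fnl n lam (-p + (k : ℝ) + c) *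
        Complex.exp (2 * Real.pi * Complex.I * (n : ℂ) * ((((k : ℝ) + c) : ℝ) : ℂ) * ((-q : ℝ) : ℂ)))
      = (-1 : ℂ) ^ lam * ∑' k : ℤ, Fnl n lam (p + (k : ℝ) + c') *
        Complex.exp (2 * Real.pi * Complex.I * (n : ℂ) * ((((k : ℝ) + c') : ℝ) : ℂ) * ((q : ℝ) : ℂ)) := by
    rw [← ((Equiv.neg ℤ).trans (Equiv.subRight m)).tsum_eq, ← tsum_mul_left]
    congr 1
    funext k
    simp only [Equiv.trans_apply, Equiv.neg_apply, Equiv.subRight_apply]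
    have ha : -p + ((-k - m : ℤ) : ℝ) + c = -(p + (k : ℝ) + c') := by
      rw [hc']; push_cast; ring
    have hb : ((((-k - m : ℤ) : ℝ) + c : ℝ) : ℂ) * ((-q : ℝ) : ℂ)
        = ((((k : ℝ) + c') : ℝ) : ℂ) * ((q : ℝ) : ℂ) := by
      rw [← Complex.ofReal_mul, ← Complex.ofReal_mul]
      congr 1
      rw [hc']; push_cast; ring
    have hb2 : 2 * (Real.pi : ℂ) * Complex.I * (n : ℂ) * ((((-k - m : ℤ) : ℝ) + c : ℝ) : ℂ) * ((-q : ℝ) : ℂ)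
        = 2 * (Real.pi : ℂ) * Complex.I * (n : ℂ) * (((((k : ℝ) + c') : ℝ)) : ℂ) * ((q : ℝ) : ℂ) := by
      linear_combination (2 * (Real.pi : ℂ) * Complex.I * (n : ℂ)) * hb
    rw [ha, Fnl_neg, hb2]
    ring
  have hexps : Complex.exp (2 * Real.pi * Complex.I * (n : ℂ) * ((s + 1 / 2 : ℝ) : ℂ))
      = Complex.exp (Real.pi * Complex.I * (n : ℂ)) *
        Complex.exp (2 * Real.pi * Complex.I * (n : ℂ) * (s : ℂ)) := by
    rw [← Complex.exp_add]
    congr 1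
    push_cast
    ring
  have hexplam : Complex.exp (Real.pi * Complex.I * ((n : ℂ) + (lam : ℂ)))
      = Complex.exp (Real.pi * Complex.I * (n : ℂ)) * (-1 : ℂ) ^ lam := by
    rw [mul_add, Complex.exp_add]
    congr 1
    rw [show (Real.pi : ℂ) * Complex.I * (lam : ℂ) = (lam : ℕ) * ((Real.pi : ℂ) * Complex.I) by
      push_cast; ring]
    rw [Complex.exp_nat_mul, Complex.exp_pi_mul_I]
  rw [hexps, hsum, hexplam]
  ring


end
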